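/- arXiv:1807.07549 — 7 statements merged into one kernel-verified Lean document; each statement's English description precedes it below -/
import Mathlib

section
/- Determinant-to-log-gas identity. Let r, s be positive integers, q a nonnegative integer, and α a real number. Then det[ Σ_{m=0}^{r−1} C(m+q,q) · (m)_{j−1} · C(r+k−2−m, k−1) · α^m ]_{j,k=1,…,s} = ((−1)^{s(s−1)/2} / ∏_{j=1}^{s} j!) · Σ_{m_1,…,m_s=0}^{r−1} ∏_{j=1}^{s} C(m_j+q,q) · ∏_{1≤j<k≤s}(m_k−m_j)^2 · α^{m_1+⋯+m_s}, where (m)_a = m(m−1)⋯(m−a+1) is the falling factorial (with (m)_0 = 1). -/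
/-!
The matrix factors as `F · diag(w) · G` with `F_{jm} = (m)_j`, `w_m = C(m+q,q) α^m` and
`G_{mk} = C(r+k-1-m, k)`. Andréief's identity (a symmetrised Cauchy–Binet formula) turns its
determinant into `1/s!` times the sum over `t : Fin s → Fin r` of
`∏ w(t_i) · det[(t_i)_j] · det[C(r+k-1-t_i, k)]`, and both determinants are Vandermonde
determinants in the `t_i`: `(x)_j` is monic of degree `j` in `x`, and for `x ≤ r` one has
`C(r+k-1-x, k) = (-1)^k / k! · (x-r)_k`.
-/

open Finset Polynomial Matrix Equiv
open scoped Nat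

namespace Matrix

variable {R : Type*} [CommRing R] {n ι : Type*} [Fintype n] [DecidableEq n] [Fintype ι]

theorem det_of_sum_mul (f g : n → ι → R) :
    det (of fun j k => ∑ m, f j m * g k m) =
      ∑ t : n → ι, (∏ k, g k (t k)) * det (of fun i j => f j (t i)) := by
  conv_lhs => rw [det_apply']
  simp only [of_apply, Fintype.prod_sum, Finset.mul_sum]
  rw [Finset.sum_comm]
  refine Finset.sum_congr rfl fun t _ => ?_
  rw [← det_transpose, det_apply', Finset.mul_sum]
  refine Finset.sum_congr rfl fun σ _ => ?_
  simp only [transpose_apply, of_apply, Finset.prod_mul_distrib]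
  ring

/-- Andréief's identity. -/
theorem factorial_card_mul_det_of_sum_mul (f g : n → ι → R) :
    ((Fintype.card n)! : R) * det (of fun j k => ∑ m, f j m * g k m) =
      ∑ t : n → ι, det (of fun i j => f j (t i)) * det (of fun i k => g k (t i)) := by
  have h_reindex (σ : Perm n) (F : (n → ι) → R) : ∑ t, F (t ∘ σ) = ∑ t, F t :=
    Equiv.sum_comp (σ.symm.arrowCongr (Equiv.refl ι)) F
  have h_permute (t : n → ι) (σ : Perm n) :
      det (of fun i j => f j (t (σ i))) = Perm.sign σ * det (of fun i j => f j (t i)) :=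
    det_permute σ (of fun i j => f j (t i))
  calc ((Fintype.card n)! : R) * det (of fun j k => ∑ m, f j m * g k m)
      = ∑ σ : Perm n, ∑ t : n → ι,
          (∏ k, g k (t (σ k))) * det (of fun i j => f j (t (σ i))) := by
        rw [det_of_sum_mul, ← Fintype.card_perm, ← nsmul_eq_mul, ← Finset.card_univ,
          ← Finset.sum_const]
        exact Finset.sum_congr rfl fun σ _ =>
          (h_reindex σ fun t => (∏ k, g k (t k)) * det (of fun i j => f j (t i))).symm
    _ = ∑ t : n → ι, det (of fun i j => f j (t i)) *
          ∑ σ : Perm n, (Perm.sign σ : R) * ∏ k, g k (t (σ k)) := by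
        rw [Finset.sum_comm]
        simp only [h_permute, Finset.mul_sum]
        exact Finset.sum_congr rfl fun t _ => Finset.sum_congr rfl fun σ _ => by ring
    _ = _ := by simp only [det_apply' (of fun i k => g k _), of_apply]

end Matrix

theorem Nat.cast_choose_eq_descPochhammer_sub {K : Type*} [Field K] [CharZero K] {m r : ℕ}
    (h : m ≤ r) (k : ℕ) :
    ((r + k - 1 - m).choose k : K) = (-1) ^ k / k ! * (descPochhammer K k).eval ((m : K) - r) := by
  rcases k.eq_zero_or_pos with rfl | hk
  · simp
  have h_sub : r + k - 1 - m - (k - 1) = r - m := by omega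
  rw [Nat.cast_choose_eq_ascPochhammer_div, h_sub, Nat.cast_sub h, ← neg_sub,
    ascPochhammer_eval_neg_eq_descPochhammer]
  ring

theorem det_of_eval_monic {R : Type*} [CommRing R] {s : ℕ} (p : Fin s → R[X])
    (h_deg : ∀ i, (p i).natDegree = i) (h_monic : ∀ i, (p i).Monic) (v : Fin s → R) :
    det (of fun i j => (p j).eval (v i)) = ∏ i, ∏ j ∈ Ioi i, (v j - v i) := by
  rw [← det_eval_matrixOfPolynomials_eq_det_vandermonde v p h_deg h_monic, det_vandermonde]

theorem det_of_descFactorial {R : Type*} [CommRing R] [IsDomain R] {s : ℕ} (t : Fin s → ℕ) :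
    det (of fun i j : Fin s => ((t i).descFactorial j : R)) =
      ∏ i, ∏ j ∈ Ioi i, ((t j : R) - t i) := by
  simp only [← descPochhammer_eval_eq_descFactorial]
  exact det_of_eval_monic _ (fun j => descPochhammer_natDegree R j)
    (fun j => monic_descPochhammer R j) _

theorem det_of_choose_sub {K : Type*} [Field K] [CharZero K] {s r : ℕ} (t : Fin s → ℕ)
    (ht : ∀ i, t i ≤ r) :
    det (of fun i k : Fin s => ((r + k - 1 - t i).choose k : K)) =
      (∏ k : Fin s, (-1 : K) ^ (k : ℕ) / (k : ℕ)!) *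
        ∏ i, ∏ j ∈ Ioi i, ((t j : K) - t i) := by
  simp only [Nat.cast_choose_eq_descPochhammer_sub (ht _)]
  refine (det_mul_row (fun k : Fin s => (-1 : K) ^ (k : ℕ) / (k : ℕ)!)
    (of fun i k : Fin s => (descPochhammer K k).eval ((t i : K) - r))).trans ?_
  rw [det_of_eval_monic _ (fun j => descPochhammer_natDegree K j)
    (fun j => monic_descPochhammer K j)]
  simp only [sub_sub_sub_cancel_right]

theorem prod_neg_one_pow_div_factorial {K : Type*} [Field K] (s : ℕ) :
    ∏ k : Fin s, (-1 : K) ^ (k : ℕ) / (k : ℕ)! =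
      (-1) ^ (s * (s - 1) / 2) / ∏ k ∈ range s, (k ! : K) := by
  rw [Finset.prod_div_distrib, Finset.prod_pow_eq_pow_sum, Fin.sum_univ_eq_sum_range (fun k => k),
    Finset.sum_range_id, Fin.prod_univ_eq_prod_range (fun k => (k ! : K))]

theorem Nat.prod_range_factorial_succ_eq_factorial_mul (s : ℕ) :
    ∏ j ∈ range s, (j + 1)! = s ! * ∏ j ∈ range s, j ! := by
  simp only [Nat.factorial_succ, Finset.prod_mul_distrib, Finset.prod_range_add_one_eq_factorial]

theorem det_sum_descFactorial_mul_choose_sub {K : Type*} [Field K] [CharZero K] (r s : ℕ)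
    (w : Fin r → K) :
    det (of fun j k : Fin s => ∑ m : Fin r,
        ((m : ℕ).descFactorial j : K) * (w m * ((r + (k : ℕ) - 1 - m).choose k : K))) =
      (-1) ^ (s * (s - 1) / 2) / (∏ j ∈ range s, ((j + 1)! : K)) *
        ∑ t : Fin s → Fin r,
          (∏ i, w (t i)) * (∏ i, ∏ j ∈ Ioi i, ((t j : ℕ) - (t i : ℕ) : K)) ^ 2 := by
  have h_det_weighted (t : Fin s → Fin r) :
      det (of fun i k : Fin s => w (t i) * ((r + (k : ℕ) - 1 - t i).choose k : K)) =
        (∏ i, w (t i)) * ((-1) ^ (s * (s - 1) / 2) / (∏ k ∈ range s, (k ! : K)) *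
          ∏ i, ∏ j ∈ Ioi i, ((t j : ℕ) - (t i : ℕ) : K)) := by
    refine (det_mul_column (fun i => w (t i))
      (of fun i k : Fin s => ((r + (k : ℕ) - 1 - t i).choose k : K))).trans ?_
    rw [det_of_choose_sub (fun i => (t i : ℕ)) (fun i => (t i).is_lt.le),
      prod_neg_one_pow_div_factorial]
  have h_andreief := factorial_card_mul_det_of_sum_mul
    (fun (j : Fin s) (m : Fin r) => ((m : ℕ).descFactorial j : K))
    (fun (k : Fin s) (m : Fin r) => w m * ((r + (k : ℕ) - 1 - m).choose k : K))
  simp only [Fintype.card_fin, det_of_descFactorial, h_det_weighted] at h_andreief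
  have h_superFactorial :
      ∏ j ∈ range s, ((j + 1)! : K) = s ! * ∏ j ∈ range s, (j ! : K) := by
    exact_mod_cast Nat.prod_range_factorial_succ_eq_factorial_mul s
  rw [h_superFactorial, mul_comm (s ! : K), ← div_div, div_mul_eq_mul_div,
    eq_div_iff (by exact_mod_cast s.factorial_ne_zero), mul_comm, h_andreief, Finset.mul_sum]
  exact Finset.sum_congr rfl fun t _ => by ring

theorem det_to_loggas_general (r s : ℕ) (q : ℕ) (α : ℝ) :
    Matrix.det (Matrix.of fun j k : Fin s =>
      ∑ m ∈ Finset.range r,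
        ((m + q).choose q : ℝ) * (m.descFactorial (j : ℕ) : ℝ) *
          ((r + (k : ℕ) - 1 - m).choose (k : ℕ) : ℝ) * α ^ m) =
    ((-1 : ℝ) ^ (s * (s - 1) / 2) / ∏ j ∈ Finset.range s, ((j + 1).factorial : ℝ)) *
      ∑ m : Fin s → Fin r,
        (∏ j : Fin s, (((m j : ℕ) + q).choose q : ℝ)) *
        (∏ j : Fin s, ∏ k ∈ Finset.Ioi j, (((m k : ℕ) : ℝ) - ((m j : ℕ) : ℝ)) ^ 2) *
        α ^ (∑ j : Fin s, (m j : ℕ)) := by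
  set w : Fin r → ℝ := fun m => (((m : ℕ) + q).choose q : ℝ) * α ^ (m : ℕ)
  have h_entries : (of fun j k : Fin s => ∑ m ∈ range r,
        ((m + q).choose q : ℝ) * (m.descFactorial (j : ℕ) : ℝ) *
          ((r + (k : ℕ) - 1 - m).choose (k : ℕ) : ℝ) * α ^ m) =
      of fun j k : Fin s => ∑ m : Fin r,
        ((m : ℕ).descFactorial j : ℝ) * (w m * ((r + (k : ℕ) - 1 - m).choose k : ℝ)) := by
    ext j k
    rw [of_apply, of_apply, ← Fin.sum_univ_eq_sum_range]
    exact Finset.sum_congr rfl fun m _ => by ring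
  rw [h_entries, det_sum_descFactorial_mul_choose_sub]
  congr 1
  refine Finset.sum_congr rfl fun t _ => ?_
  simp only [w, Finset.prod_mul_distrib, Finset.prod_pow_eq_pow_sum, ← Finset.prod_pow]
  ring

/-- Determinant-to-log-gas identity:
`det[ Σ_{m=0}^{r−1} C(m+q,q)·(m)_{j−1}·C(r+k−2−m,k−1)·α^m ]_{j,k=1,…,s}
  = ((−1)^{s(s−1)/2}/∏_{j=1}^s j!) Σ_{m_1,…,m_s=0}^{r−1} ∏_j C(m_j+q,q)
      ∏_{j<k}(m_k−m_j)^2 α^{m_1+⋯+m_s}`,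
where `(m)_a = m(m−1)⋯(m−a+1)` is the falling factorial (here
`Nat.descFactorial m a`).  Indices `j, k : Fin s` are zero-based, so `(m)_{j−1}`
becomes `m.descFactorial (j : ℕ)` and `C(r+k−2−m, k−1)` becomes
`C(r+(k:ℕ)−1−m, (k:ℕ))`. -/
theorem det_to_loggas (r s : ℕ) (hr : 0 < r) (hs : 0 < s) (q : ℕ) (α : ℝ) :
    Matrix.det (Matrix.of fun j k : Fin s =>
      ∑ m ∈ Finset.range r,
        ((m + q).choose q : ℝ) * (m.descFactorial (j : ℕ) : ℝ) *
          ((r + (k : ℕ) - 1 - m).choose (k : ℕ) : ℝ) * α ^ m) =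
    ((-1 : ℝ) ^ (s * (s - 1) / 2) / ∏ j ∈ Finset.range s, ((j + 1).factorial : ℝ)) *
      ∑ m : Fin s → Fin r,
        (∏ j : Fin s, (((m j : ℕ) + q).choose q : ℝ)) *
        (∏ j : Fin s, ∏ k ∈ Finset.Ioi j, (((m k : ℕ) : ℝ) - ((m j : ℕ) : ℝ)) ^ 2) *
        α ^ (∑ j : Fin s, (m j : ℕ)) :=
  det_to_loggas_general r s q α
end

section
/- Contour integral–binomial sum identity. Let a, b be positive integers, c a nonnegative integer, α, β ∈ ℂ, and let ρ > max(|α|,|β|). Then (1/(2πi)) ∮_{|x|=ρ} x^c / ((x−α)^a (x−β)^b) dx = Σ_{m=a−1}^{c−b} C(m, a−1) · C(c−m−1, b−1) · α^{m−a+1} · β^{c−m−b}, where the sum is understood as empty (equal to 0) when c−b < a−1, and the contour is traversed counterclockwise. -/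
/-!
For `‖z‖ > ‖α‖` the negative-binomial series
`(z - α)⁻¹ ^ (n + 1) = ∑ᵢ C(i + n, n) αⁱ / z ^ (i + n + 1)` converges absolutely, uniformly on
circles, so the integrand is a doubly indexed Laurent series in `z` that may be integrated
termwise. Only the terms in `z⁻¹` contribute, each with `2πi` times its coefficient; these are
the pairs `(i, j)` with `i + j = c + 1 - a - b`, and `m = i + a - 1` turns them into the
binomial sum.
-/

open Complex Metric Finset Real

theorem hasSum_circleIntegral_of_summable_bound {E ι : Type*} [NormedAddCommGroup E]
    [NormedSpace ℂ E] [Countable ι] {F : ι → ℂ → E} {f : ℂ → E} {c : ℂ} {R : ℝ}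
    {bound : ι → ℝ} (hF : ∀ i, CircleIntegrable (F i) c R)
    (h_bound : ∀ i, ∀ z ∈ sphere c |R|, ‖F i z‖ ≤ bound i) (h_sum : Summable bound)
    (h_lim : ∀ z ∈ sphere c |R|, HasSum (fun i => F i z) (f z)) :
    HasSum (fun i => ∮ z in C(c, R), F i z) (∮ z in C(c, R), f z) := by
  refine intervalIntegral.hasSum_integral_of_dominated_convergence (fun i _ => |R| * bound i)
    (fun i => ?_) (fun i => ?_) ?_ ?_ ?_
  · simp only [deriv_circleMap]
    exact ((continuous_circleMap 0 R).mul continuous_const).aestronglyMeasurable.smul (hF i).def'.1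
  · refine .of_forall fun θ _ => ?_
    rw [norm_smul, deriv_circleMap, norm_mul, norm_circleMap_zero, norm_I, mul_one]
    exact mul_le_mul_of_nonneg_left (h_bound i _ (circleMap_mem_sphere' c R θ)) (abs_nonneg R)
  · exact .of_forall fun θ _ => h_sum.mul_left |R|
  · exact intervalIntegrable_const
  · exact .of_forall fun θ _ => (h_lim _ (circleMap_mem_sphere' c R θ)).const_smul _

theorem circleIntegral_sub_zpow (c : ℂ) {R : ℝ} (hR : 0 < R) (n : ℤ) :
    ∮ z in C(c, R), (z - c) ^ n = if n = -1 then 2 * π * I else 0 := by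
  split_ifs with hn
  · subst hn
    simp only [zpow_neg_one]
    exact circleIntegral.integral_sub_inv_of_mem_ball (mem_ball_self hR)
  · exact circleIntegral.integral_sub_zpow_of_ne hn c c R

theorem hasSum_circleIntegral_of_hasSum_zpow {ι : Type*} [Countable ι] {a : ι → ℂ} {k : ι → ℤ}
    {f : ℂ → ℂ} {c : ℂ} {R : ℝ} (hR : 0 < R) (hsum : Summable fun i => ‖a i‖ * R ^ k i)
    (hf : ∀ z ∈ sphere c R, HasSum (fun i => a i * (z - c) ^ k i) (f z)) :
    HasSum (fun i => if k i = -1 then 2 * π * I * a i else 0) (∮ z in C(c, R), f z) := by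
  have hsphere : sphere c |R| = sphere c R := by rw [abs_of_pos hR]
  have hint : ∀ i, CircleIntegrable (fun z => a i * (z - c) ^ k i) c R := fun i =>
    (continuousOn_const.mul ((continuousOn_id.sub continuousOn_const).zpow₀ (k i)
      fun z hz => .inl (sub_ne_zero.mpr (ne_of_mem_sphere hz hR.ne')))).circleIntegrable hR.le
  have hbound : ∀ i, ∀ z ∈ sphere c |R|, ‖a i * (z - c) ^ k i‖ ≤ ‖a i‖ * R ^ k i := by
    intro i z hz
    rw [hsphere, mem_sphere_iff_norm] at hz
    rw [norm_mul, norm_zpow, hz]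
  have hterm : ∀ i, (∮ z in C(c, R), a i * (z - c) ^ k i) =
      if k i = -1 then 2 * π * I * a i else 0 := fun i => by
    rw [circleIntegral.integral_const_mul, circleIntegral_sub_zpow c hR, mul_ite, mul_zero,
      mul_comm]
  simpa only [hterm] using
    hasSum_circleIntegral_of_summable_bound hint hbound hsum (hsphere ▸ hf)

theorem hasSum_inv_sub_pow_succ {𝕜 : Type*} [NormedField 𝕜] [CompleteSpace 𝕜] {α z : 𝕜}
    (h : ‖α‖ < ‖z‖) (n : ℕ) :
    HasSum (fun i : ℕ => ((i + n).choose n : 𝕜) * α ^ i / z ^ (i + n + 1))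
      ((z - α) ^ (n + 1))⁻¹ := by
  have hz : z ≠ 0 := norm_pos_iff.mp ((norm_nonneg α).trans_lt h)
  have hr : ‖α / z‖ < 1 := by
    rwa [norm_div, div_lt_one ((norm_nonneg α).trans_lt h)]
  convert (hasSum_choose_mul_geometric_of_norm_lt_one n hr).div_const (z ^ (n + 1)) using 1
  · ext i
    rw [div_pow, add_assoc, pow_add z i]
    ring
  · rw [div_div, ← mul_pow, one_sub_div hz, div_mul_cancel₀ _ hz, one_div]

section RCLike

variable {𝕜 : Type*} [RCLike 𝕜] {α β z : 𝕜}

theorem summable_norm_choose_mul_pow_div_pow (h : ‖α‖ < ‖z‖) (n : ℕ) :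
    Summable fun i : ℕ => ‖((i + n).choose n : 𝕜) * α ^ i / z ^ (i + n + 1)‖ := by
  have h' : ‖‖α‖‖ < ‖‖z‖‖ := by simpa using h
  refine (hasSum_inv_sub_pow_succ h' n).summable.congr fun i => ?_
  simp only [norm_mul, norm_div, norm_pow, RCLike.norm_natCast]

theorem hasSum_pow_div_sub_pow_mul_sub_pow (hα : ‖α‖ < ‖z‖) (hβ : ‖β‖ < ‖z‖) (c m n : ℕ) :
    HasSum (fun p : ℕ × ℕ => ((p.1 + m).choose m * (p.2 + n).choose n : 𝕜) * α ^ p.1 * β ^ p.2 *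
        z ^ ((c : ℤ) - (p.1 + p.2 + m + n + 2 : ℕ)))
      (z ^ c / ((z - α) ^ (m + 1) * (z - β) ^ (n + 1))) := by
  have hz : z ≠ 0 := norm_pos_iff.mp ((norm_nonneg α).trans_lt hα)
  have hsummable : Summable fun p : ℕ × ℕ => ((p.1 + m).choose m : 𝕜) * α ^ p.1 /
      z ^ (p.1 + m + 1) * (((p.2 + n).choose n : 𝕜) * β ^ p.2 / z ^ (p.2 + n + 1)) :=
    summable_mul_of_summable_norm
      (f := fun i : ℕ => ((i + m).choose m : 𝕜) * α ^ i / z ^ (i + m + 1))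
      (g := fun j : ℕ => ((j + n).choose n : 𝕜) * β ^ j / z ^ (j + n + 1))
      (summable_norm_choose_mul_pow_div_pow hα m) (summable_norm_choose_mul_pow_div_pow hβ n)
  have hprod := ((hasSum_inv_sub_pow_succ hα m).mul (hasSum_inv_sub_pow_succ hβ n)
    hsummable).mul_left (z ^ c)
  rw [div_eq_mul_inv, mul_inv]
  refine hprod.congr_fun fun p => ?_
  rw [zpow_sub₀ hz, zpow_natCast, zpow_natCast]
  field_simp
  ring

theorem summable_norm_choose_mul_choose_mul_zpow {r : ℝ} (hα : ‖α‖ < r) (hβ : ‖β‖ < r)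
    (c m n : ℕ) :
    Summable fun p : ℕ × ℕ => ‖((p.1 + m).choose m * (p.2 + n).choose n : 𝕜) * α ^ p.1 * β ^ p.2‖ *
      r ^ ((c : ℤ) - (p.1 + p.2 + m + n + 2 : ℕ)) := by
  have hr : ‖r‖ = r := Real.norm_of_nonneg ((norm_nonneg α).trans hα.le)
  have hreal := hasSum_pow_div_sub_pow_mul_sub_pow (z := r) (α := ‖α‖) (β := ‖β‖)
    (by rwa [norm_norm, hr]) (by rwa [norm_norm, hr]) c m n
  refine hreal.summable.congr fun p => ?_
  simp only [norm_mul, norm_pow, RCLike.norm_natCast]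

end RCLike

theorem hasSum_ite_add_eq_sum_Icc {M : Type*} [AddCommMonoid M] [TopologicalSpace M] (a b c : ℕ)
    (g : ℕ → ℕ → M) :
    HasSum (fun p : ℕ × ℕ => if p.1 + p.2 + a + b = c then g p.1 p.2 else 0)
      (∑ m ∈ (Icc a c).filter (fun m => m + b ≤ c), g (m - a) (c - m - b)) := by
  set s := (Icc a c).filter (fun m => m + b ≤ c)
  have hinj : Set.InjOn (fun m => (m - a, c - m - b)) s := by
    intro m hm m' hm' h
    simp only [s, coe_filter, mem_Icc, Set.mem_ofPred_eq, Prod.mk.injEq] at hm hm' h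
    omega
  have hsupport : ∀ p ∉ s.image (fun m => (m - a, c - m - b)),
      (if p.1 + p.2 + a + b = c then g p.1 p.2 else 0) = 0 := by
    intro p hp
    refine if_neg fun hc => hp (mem_image.mpr ⟨p.1 + a, ?_, ?_⟩)
    · simp only [s, mem_filter, mem_Icc]
      omega
    · ext <;> simp only <;> omega
  have hsum : HasSum _ _ := hasSum_sum_of_ne_finset_zero hsupport
  rw [sum_image hinj] at hsum
  convert hsum using 1
  refine sum_congr rfl fun m hm => ?_
  simp only [s, mem_filter, mem_Icc] at hm
  rw [if_pos (by omega)]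

/-- Contour integral–binomial sum identity:
`(1/(2πi)) ∮_{|x|=ρ} x^c/((x−α)^a (x−β)^b) dx
  = Σ_{m=a−1}^{c−b} C(m,a−1) C(c−m−1,b−1) α^{m−a+1} β^{c−m−b}`,
the sum being empty when `c−b < a−1`.  The index set is encoded as the set of
natural numbers `m` with `a−1 ≤ m` and `m+b ≤ c`. -/
theorem contour_integral_binomial_sum
    (a b c : ℕ) (ha : 0 < a) (hb : 0 < b) (α β : ℂ) (ρ : ℝ)
    (hρ : max ‖α‖ ‖β‖ < ρ) :
    (2 * Real.pi * Complex.I)⁻¹ *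
        (∮ x in C(0, ρ), x ^ c / ((x - α) ^ a * (x - β) ^ b)) =
      ∑ m ∈ (Finset.Icc (a - 1) c).filter (fun m => m + b ≤ c),
        (m.choose (a - 1) : ℂ) * ((c - m - 1).choose (b - 1) : ℂ) *
          α ^ (m + 1 - a) * β ^ (c - m - b) := by
  obtain ⟨hα, hβ⟩ := max_lt_iff.mp hρ
  have hρ0 : 0 < ρ := (norm_nonneg α).trans_lt hα
  obtain ⟨a, rfl⟩ := Nat.exists_eq_add_one_of_ne_zero ha.ne'
  obtain ⟨b, rfl⟩ := Nat.exists_eq_add_one_of_ne_zero hb.ne'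
  have hres := hasSum_circleIntegral_of_hasSum_zpow
    (f := fun z => z ^ c / ((z - α) ^ (a + 1) * (z - β) ^ (b + 1))) hρ0
    (summable_norm_choose_mul_choose_mul_zpow hα hβ c a b) fun z hz => by
      rw [mem_sphere_zero_iff_norm] at hz
      simpa only [sub_zero] using hasSum_pow_div_sub_pow_mul_sub_pow (hz ▸ hα) (hz ▸ hβ) c a b
  have hcond : ∀ p : ℕ × ℕ,
      (c : ℤ) - (p.1 + p.2 + a + b + 2 : ℕ) = -1 ↔ p.1 + p.2 + a + (b + 1) = c :=
    fun p => by omega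
  simp only [hcond] at hres
  rw [hres.unique (hasSum_ite_add_eq_sum_Icc a (b + 1) c fun i j =>
      2 * π * I * (((i + a).choose a * (j + b).choose b : ℂ) * α ^ i * β ^ j)),
    ← mul_sum, inv_mul_cancel_left₀ two_pi_I_ne_zero]
  simp only [Nat.add_sub_cancel, Nat.add_sub_add_right]
  refine sum_congr rfl fun m hm => ?_
  simp only [mem_filter, mem_Icc] at hm
  simp only [Nat.sub_add_cancel hm.1.1, show c - m - (b + 1) + b = c - m - 1 by omega]
end

section
/- Solution of the tangent-method system in Regime I. Let α ∈ (0,1), define M(w) = w/((w−1)(αw+1−α)) and Φ(w) = αw/(αw+1−α), and set F(w;x,y) = x − M(w)·y − Φ(w). Let w_0 ∈ ℝ with w_0 ≠ 1 and w_0 ≠ 0, and define x_0 = αw_0^2/(αw_0^2+1−α), y_0 = α(1−α)(w_0−1)^2/(αw_0^2+1−α). Then F(w_0; x_0, y_0) = 0, and the derivative of the function w ↦ F(w; x_0, y_0) at w = w_0 equals 0. -/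
/-!
Both `M` and `Φ` have derivatives of a simple closed form,
`M'(w) = -(αw²+1-α) / ((w-1)²(αw+1-α)²)` and `Φ'(w) = α(1-α) / (αw+1-α)²`,
so `∂_w F(w₀; x, y) = 0` is linear in `y` and its solution is exactly `y₀`;
`x₀ = M(w₀) y₀ + Φ(w₀)` is then a direct computation.
-/

noncomputable section

def arcticM (α w : ℝ) : ℝ := w / ((w - 1) * (α * w + 1 - α))

def arcticΦ (α w : ℝ) : ℝ := α * w / (α * w + 1 - α)

variable {α w : ℝ}

theorem hasDerivAt_affine (α w : ℝ) : HasDerivAt (fun w : ℝ => α * w + 1 - α) α w := by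
  simpa using (((hasDerivAt_id w).const_mul α).add_const 1).sub_const α

theorem hasDerivAt_arcticM (hw : w ≠ 1) (hd : α * w + 1 - α ≠ 0) :
    HasDerivAt (arcticM α)
      (-(α * w ^ 2 + 1 - α) / ((w - 1) ^ 2 * (α * w + 1 - α) ^ 2)) w := by
  have hw' : w - 1 ≠ 0 := sub_ne_zero.mpr hw
  have hden := (hasDerivAt_id' w |>.sub_const 1).fun_mul (hasDerivAt_affine α w)
  refine (hasDerivAt_id' w |>.fun_div hden (mul_ne_zero hw' hd)).congr_deriv ?_
  field_simp
  ring

theorem hasDerivAt_arcticΦ (hd : α * w + 1 - α ≠ 0) :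
    HasDerivAt (arcticΦ α) (α * (1 - α) / (α * w + 1 - α) ^ 2) w := by
  refine ((hasDerivAt_id' w).const_mul α |>.fun_div (hasDerivAt_affine α w) hd).congr_deriv ?_
  field_simp
  ring

theorem mul_sq_add_one_sub_pos (hα₀ : 0 ≤ α) (hα₁ : α < 1) (w : ℝ) : 0 < α * w ^ 2 + 1 - α := by
  nlinarith [mul_nonneg hα₀ (sq_nonneg w)]

end

theorem tangent_method_system_regimeI_general
    (α : ℝ) (hα : α ∈ Set.Ioo (0 : ℝ) 1)
    (w₀ : ℝ) (hw₀1 : w₀ ≠ 1) (hd : α * w₀ + 1 - α ≠ 0)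
    (x₀ y₀ : ℝ)
    (hx : x₀ = α * w₀ ^ 2 / (α * w₀ ^ 2 + 1 - α))
    (hy : y₀ = α * (1 - α) * (w₀ - 1) ^ 2 / (α * w₀ ^ 2 + 1 - α)) :
    x₀ - (w₀ / ((w₀ - 1) * (α * w₀ + 1 - α))) * y₀ - α * w₀ / (α * w₀ + 1 - α) = 0 ∧
    deriv (fun w : ℝ =>
      x₀ - (w / ((w - 1) * (α * w + 1 - α))) * y₀ - α * w / (α * w + 1 - α)) w₀ = 0 := by
  change x₀ - arcticM α w₀ * y₀ - arcticΦ α w₀ = 0 ∧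
    deriv (fun w => x₀ - arcticM α w * y₀ - arcticΦ α w) w₀ = 0
  have hD := (mul_sq_add_one_sub_pos hα.1.le hα.2 w₀).ne'
  have hw' : w₀ - 1 ≠ 0 := sub_ne_zero.mpr hw₀1
  have hF : HasDerivAt (fun w => x₀ - arcticM α w * y₀ - arcticΦ α w) _ w₀ :=
    ((hasDerivAt_const w₀ x₀).sub ((hasDerivAt_arcticM hw₀1 hd).mul_const y₀)).sub
      (hasDerivAt_arcticΦ hd)
  refine ⟨?_, ?_⟩
  · rw [arcticM, arcticΦ, hx, hy]
    field_simp
    ring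
  · rw [hF.deriv, hy]
    field_simp
    ring

/-- Solution of the tangent-method system in Regime I: with
`M(w) = w/((w−1)(αw+1−α))`, `Φ(w) = αw/(αw+1−α)`,
`F(w;x,y) = x − M(w)y − Φ(w)`, and the point
`x₀ = αw₀²/(αw₀²+1−α)`, `y₀ = α(1−α)(w₀−1)²/(αw₀²+1−α)`, one has
`F(w₀;x₀,y₀) = 0` and `(d/dw) F(w;x₀,y₀) |_{w=w₀} = 0`. -/
theorem tangent_method_system_regimeI
    (α : ℝ) (hα : α ∈ Set.Ioo (0 : ℝ) 1)
    (w₀ : ℝ) (hw₀1 : w₀ ≠ 1) (hw₀0 : w₀ ≠ 0) (hd : α * w₀ + 1 - α ≠ 0)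
    (x₀ y₀ : ℝ)
    (hx : x₀ = α * w₀ ^ 2 / (α * w₀ ^ 2 + 1 - α))
    (hy : y₀ = α * (1 - α) * (w₀ - 1) ^ 2 / (α * w₀ ^ 2 + 1 - α)) :
    x₀ - (w₀ / ((w₀ - 1) * (α * w₀ + 1 - α))) * y₀ - α * w₀ / (α * w₀ + 1 - α) = 0 ∧
    deriv (fun w : ℝ =>
      x₀ - (w / ((w - 1) * (α * w + 1 - α))) * y₀ - α * w / (α * w + 1 - α)) w₀ = 0 :=
  tangent_method_system_regimeI_general α hα w₀ hw₀1 hd x₀ y₀ hx hy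
end

section
/- The critical corner lies on the arctic ellipse. Let α ∈ (0,1) and Q ≥ 0, define R_c = (1+√(α(1+Q)))^2/(1−α), and set ξ_x = R_c/(R_c+Q+1), ξ_y = 1/(R_c+Q+1). Then (1−ξ_x−ξ_y)^2/(1−α) + (ξ_x−ξ_y)^2/α = 1, and moreover √ξ_y = √((1−α)ξ_x) − √(α(1−ξ_x)). -/
/-- The critical corner lies on the arctic ellipse: for `α ∈ (0,1)`, `Q ≥ 0`,
`R_c = (1+√(α(1+Q)))²/(1−α)`, `ξ_x = R_c/(R_c+Q+1)`, `ξ_y = 1/(R_c+Q+1)`, one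
has `(1−ξ_x−ξ_y)²/(1−α) + (ξ_x−ξ_y)²/α = 1` and
`√ξ_y = √((1−α)ξ_x) − √(α(1−ξ_x))`. -/
theorem critical_corner_on_arctic_ellipse
    (α Q Rc ξx ξy : ℝ) (hα : α ∈ Set.Ioo (0 : ℝ) 1) (hQ : 0 ≤ Q)
    (hRc : Rc = (1 + Real.sqrt (α * (1 + Q))) ^ 2 / (1 - α))
    (hξx : ξx = Rc / (Rc + Q + 1)) (hξy : ξy = 1 / (Rc + Q + 1)) :
    (1 - ξx - ξy) ^ 2 / (1 - α) + (ξx - ξy) ^ 2 / α = 1 ∧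
    Real.sqrt ξy = Real.sqrt ((1 - α) * ξx) - Real.sqrt (α * (1 - ξx)) := by
  obtain ⟨hα0, hα1⟩ := hα
  set s := Real.sqrt (α * (1 + Q)) with hs
  have hs0 : 0 ≤ s := Real.sqrt_nonneg _
  have hs2 : s ^ 2 = α * (1 + Q) := Real.sq_sqrt (by nlinarith)
  have h1α : (0:ℝ) < 1 - α := by linarith
  have hN : (0:ℝ) < 2 + Q + 2 * s := by linarith
  have hNne : (2 + Q + 2 * s) ≠ 0 := ne_of_gt hN
  have h1αne : (1 - α) ≠ 0 := ne_of_gt h1α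
  have hD : Rc + Q + 1 = (2 + Q + 2 * s) / (1 - α) := by
    rw [hRc]; field_simp; nlinarith [hs2]
  have hx : ξx = (1 + s) ^ 2 / (2 + Q + 2 * s) := by
    rw [hξx, hD, hRc]; field_simp
  have hy : ξy = (1 - α) / (2 + Q + 2 * s) := by
    rw [hξy, hD]; field_simp
  have h1x : 1 - ξx = (1 - α) * (1 + Q) / (2 + Q + 2 * s) := by
    rw [hx]; field_simp; nlinarith [hs2]
  have e1 : 1 - ξx - ξy = (1 - α) * Q / (2 + Q + 2 * s) := by
    rw [hx, hy]; field_simp; linear_combination -hs2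
  have e2 : ξx - ξy = (2 * s + α * (2 + Q)) / (2 + Q + 2 * s) := by
    rw [hx, hy]; field_simp; linear_combination hs2
  constructor
  · rw [e1, e2, div_pow, div_pow, div_div, div_div,
      div_add_div _ _ (by positivity) (by positivity),
      div_eq_one_iff_eq (by positivity)]
    linear_combination (4 * (1 - α) ^ 2 * (2 + Q + 2 * s) ^ 2) * hs2
  · set t := Real.sqrt ((1 - α) / (2 + Q + 2 * s)) with htdef
    have ht0 : 0 ≤ t := Real.sqrt_nonneg _
    have ht2 : t ^ 2 = (1 - α) / (2 + Q + 2 * s) :=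
      Real.sq_sqrt (by positivity)
    have hyt : ξy = t ^ 2 := by rw [hy, ht2]
    have hxt : (1 - α) * ξx = ((1 + s) * t) ^ 2 := by
      rw [hx, mul_pow, ht2]; ring
    have h1xt : α * (1 - ξx) = (s * t) ^ 2 := by
      rw [h1x, mul_pow, ht2]; field_simp; nlinarith [hs2]
    rw [hyt, hxt, h1xt, Real.sqrt_sq ht0, Real.sqrt_sq (by positivity),
      Real.sqrt_sq (by positivity)]
    ring
end

section
/- The doubly tangent line of the Regime II arctic curve (Q = 0). Let α ∈ (0,1), set R_c = (1+√α)/(1−√α) and w_0 = 2R_c/(R_c−1). Then: (i) w_0 = (1+√α)/√α; (ii) M(w_0) = 1, where M(w) = w/((w−1)(αw+1−α)); (iii) u_0 := (αw_0+1−α)/w_0 = √α; (iv) for every R > 1, with ξ_x = R/(R+1) and ξ_y = 1/(R+1), one has α/(2u_0) + ξ_x/2 + ξ_y(u_0−α)/(2u_0(u_0−1)) = (R·R_c−1)/((R+1)(R_c+1)) = (1+√α)/2 − ξ_y. -/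
/-- The doubly tangent line of the Regime II arctic curve (`Q = 0`): with
`R_c = (1+√α)/(1−√α)` and `w₀ = 2R_c/(R_c−1)`, one has
(i) `w₀ = (1+√α)/√α`; (ii) `M(w₀) = 1` where `M(w) = w/((w−1)(αw+1−α))`;
(iii) `u₀ := (αw₀+1−α)/w₀ = √α`; and (iv) for every `R > 1`, with
`ξ_x = R/(R+1)`, `ξ_y = 1/(R+1)`,
`α/(2u₀) + ξ_x/2 + ξ_y(u₀−α)/(2u₀(u₀−1)) = (R·R_c−1)/((R+1)(R_c+1))
  = (1+√α)/2 − ξ_y`. -/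
theorem doubly_tangent_line_regimeII_Q0
    (α Rc w₀ u₀ : ℝ) (hα : α ∈ Set.Ioo (0 : ℝ) 1)
    (hRc : Rc = (1 + Real.sqrt α) / (1 - Real.sqrt α))
    (hw₀ : w₀ = 2 * Rc / (Rc - 1))
    (hu₀ : u₀ = (α * w₀ + 1 - α) / w₀) :
    w₀ = (1 + Real.sqrt α) / Real.sqrt α ∧
    w₀ / ((w₀ - 1) * (α * w₀ + 1 - α)) = 1 ∧
    u₀ = Real.sqrt α ∧
    ∀ R : ℝ, 1 < R → ∀ ξx ξy : ℝ, ξx = R / (R + 1) → ξy = 1 / (R + 1) →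
      α / (2 * u₀) + ξx / 2 + ξy * (u₀ - α) / (2 * u₀ * (u₀ - 1)) =
        (R * Rc - 1) / ((R + 1) * (Rc + 1)) ∧
      (R * Rc - 1) / ((R + 1) * (Rc + 1)) = (1 + Real.sqrt α) / 2 - ξy := by
  obtain ⟨hα0, hα1⟩ := hα
  set s := Real.sqrt α with hs_def
  have hs0 : 0 < s := Real.sqrt_pos.mpr hα0
  have hs1 : s < 1 := by
    rw [hs_def, show (1:ℝ) = Real.sqrt 1 by simp]
    exact Real.sqrt_lt_sqrt hα0.le hα1
  have hsq : s * s = α := Real.mul_self_sqrt hα0.le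
  have hsne : s ≠ 0 := ne_of_gt hs0
  have h1s : (1:ℝ) - s ≠ 0 := by linarith
  have h1ps : (1:ℝ) + s ≠ 0 := by linarith
  have hw : w₀ = (1 + s) / s := by
    have hRc1 : Rc - 1 = 2 * s / (1 - s) := by
      rw [hRc]; field_simp; ring
    have hne : 2 * s / (1 - s) ≠ 0 :=
      div_ne_zero (by linarith) h1s
    rw [hw₀, hRc1, hRc]
    field_simp
  have hwne : w₀ ≠ 0 := by
    rw [hw]; exact div_ne_zero h1ps hsne
  have hu : u₀ = s := by
    rw [hu₀, hw, ← hsq]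
    field_simp
    ring
  refine ⟨hw, ?_, hu, ?_⟩
  · have h2 : (w₀ - 1) * (α * w₀ + 1 - α) = w₀ := by
      rw [hw, ← hsq]; field_simp; ring
    rw [h2, div_self hwne]
  · intro R hR ξx ξy hξx hξy
    subst hξx hξy
    have hRp : (R : ℝ) + 1 ≠ 0 := by linarith
    have hs1' : s - 1 ≠ 0 := by linarith
    constructor
    · rw [hu, hRc, ← hsq]
      field_simp
      ring
    · rw [hRc]
      field_simp
      ring
end

section
/- Quadratic factorization of M_2^2 − M_1^2 in Regime II for general Q. Let Q ≥ 0, let 0 ≤ a ≤ b ≤ R be real numbers, let α > 0, and fix a sign ε ∈ {+1,−1}. Define K_2 = √((R−a)(b+Q)) − √((R−b)(a+Q)), K_1 = √((R−a)(a+Q)) − √((R−b)(b+Q)), L_2 = √((R−a)b) − ε·√((R−b)a), L_1 = √((R−b)b) − ε·√((R−a)a), and for u ∈ ℝ set M_i = L_i·u/√α − K_i (i = 1,2). Assume the constraint √α·((√(R−a)−√(R−b))/(√(R−a)+√(R−b)))·((√b + ε√a)/(√(b+Q)−√(a+Q))) = 1 holds (in particular √(R−a)+√(R−b) > 0 and √(b+Q)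 ≠ √(a+Q)). Then for every u ∈ ℝ, M_2^2 − M_1^2 = (b−a)^2·(u−α)(u−1)/α. -/
/-- Quadratic factorization of `M₂² − M₁²` in Regime II for general `Q`: under
the saddle-point constraint
`√α·((√(R−a)−√(R−b))/(√(R−a)+√(R−b)))·((√b+ε√a)/(√(b+Q)−√(a+Q))) = 1`,
with `M_i(u) = L_i·u/√α − K_i`, one has
`M₂(u)² − M₁(u)² = (b−a)²(u−α)(u−1)/α` for every real `u`. -/
theorem M2_sq_sub_M1_sq_factorization
    (Q a b R α ε : ℝ) (hQ : 0 ≤ Q) (ha : 0 ≤ a) (hab : a ≤ b) (hbR : b ≤ R)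
    (hα : 0 < α) (hε : ε = 1 ∨ ε = -1)
    (K2 K1 L2 L1 : ℝ)
    (hK2 : K2 = Real.sqrt ((R - a) * (b + Q)) - Real.sqrt ((R - b) * (a + Q)))
    (hK1 : K1 = Real.sqrt ((R - a) * (a + Q)) - Real.sqrt ((R - b) * (b + Q)))
    (hL2 : L2 = Real.sqrt ((R - a) * b) - ε * Real.sqrt ((R - b) * a))
    (hL1 : L1 = Real.sqrt ((R - b) * b) - ε * Real.sqrt ((R - a) * a))
    (hconstraint : Real.sqrt α *
      ((Real.sqrt (R - a) - Real.sqrt (R - b)) / (Real.sqrt (R - a) + Real.sqrt (R - b))) *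
      ((Real.sqrt b + ε * Real.sqrt a) / (Real.sqrt (b + Q) - Real.sqrt (a + Q))) = 1) :
    ∀ u : ℝ,
      (L2 * u / Real.sqrt α - K2) ^ 2 - (L1 * u / Real.sqrt α - K1) ^ 2 =
        (b - a) ^ 2 * (u - α) * (u - 1) / α := by
  have hRa : (0:ℝ) ≤ R - a := by linarith
  have hRb : (0:ℝ) ≤ R - b := by linarith
  have hbQ : (0:ℝ) ≤ b + Q := by linarith
  have haQ : (0:ℝ) ≤ a + Q := by linarith
  have hb0 : (0:ℝ) ≤ b := le_trans ha hab
  rw [Real.sqrt_mul hRa, Real.sqrt_mul hRb] at hK2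
  rw [Real.sqrt_mul hRa, Real.sqrt_mul hRb] at hK1
  rw [Real.sqrt_mul hRa, Real.sqrt_mul hRb] at hL2
  rw [Real.sqrt_mul hRb, Real.sqrt_mul hRa] at hL1
  set s := Real.sqrt (R - a) with hsdef
  set t := Real.sqrt (R - b) with htdef
  set p := Real.sqrt (b + Q) with hpdef
  set q := Real.sqrt (a + Q) with hqdef
  set x := Real.sqrt b with hxdef
  set y := Real.sqrt a with hydef
  set r := Real.sqrt α with hrdef
  have hs : s ^ 2 = R - a := Real.sq_sqrt hRa
  have ht : t ^ 2 = R - b := Real.sq_sqrt hRb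
  have hp : p ^ 2 = b + Q := Real.sq_sqrt hbQ
  have hq : q ^ 2 = a + Q := Real.sq_sqrt haQ
  have hx : x ^ 2 = b := Real.sq_sqrt hb0
  have hy : y ^ 2 = a := Real.sq_sqrt ha
  have hr0 : 0 < r := Real.sqrt_pos.mpr hα
  have hα2 : r ^ 2 = α := Real.sq_sqrt hα.le
  have hε2 : ε ^ 2 = 1 := by rcases hε with rfl | rfl <;> norm_num
  have hst : s + t ≠ 0 := by
    intro h; rw [h] at hconstraint; simp at hconstraint
  have hpq : p - q ≠ 0 := by
    intro h; rw [h] at hconstraint; simp at hconstraint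
  have hE : r * (s - t) * (x + ε * y) = (s + t) * (p - q) := by
    field_simp at hconstraint
    linear_combination hconstraint
  subst hK2 hK1 hL2 hL1
  intro u
  have step1 : r * (x + ε * y) * (p + q) * (s - t) ^ 2 = (s ^ 2 - t ^ 2) * (p ^ 2 - q ^ 2) := by
    linear_combination ((s - t) * (p + q)) * hE
  have step2 : r * (x - ε * y) * (p - q) * (s + t) ^ 2
      = r ^ 2 * (s ^ 2 - t ^ 2) * (x ^ 2 - ε ^ 2 * y ^ 2) := by
    linear_combination (-(r * (x - ε * y) * (s + t))) * hE
  have hquad : (s * x - ε * (t * y)) ^ 2 - (t * x - ε * (s * y)) ^ 2 = (b - a) ^ 2 := by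
    linear_combination (x ^ 2 - y ^ 2) * hs - (x ^ 2 - y ^ 2) * ht + (b - a) * hx
      - (b - a) * hy - (s ^ 2 - t ^ 2) * y ^ 2 * hε2
  have hconst : (s * p - t * q) ^ 2 - (s * q - t * p) ^ 2 = (b - a) ^ 2 := by
    linear_combination (p ^ 2 - q ^ 2) * hs - (p ^ 2 - q ^ 2) * ht + (b - a) * hp - (b - a) * hq
  have hcross : 2 * ((s * x - ε * (t * y)) * (s * p - t * q)
      - (t * x - ε * (s * y)) * (s * q - t * p)) * r = (b - a) ^ 2 * (1 + r ^ 2) := by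
    linear_combination step1 + step2 + (p ^ 2 - q ^ 2 + r ^ 2 * (x ^ 2 - y ^ 2)) * hs
      - (p ^ 2 - q ^ 2 + r ^ 2 * (x ^ 2 - y ^ 2)) * ht + (b - a) * hp - (b - a) * hq
      + r ^ 2 * (b - a) * hx - r ^ 2 * (b - a) * hy - r ^ 2 * (s ^ 2 - t ^ 2) * y ^ 2 * hε2
  have key : ((s * x - ε * (t * y)) * u - (s * p - t * q) * r) ^ 2
      - ((t * x - ε * (s * y)) * u - (s * q - t * p) * r) ^ 2
      = (b - a) ^ 2 * (u - r ^ 2) * (u - 1) := by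
    linear_combination u ^ 2 * hquad - u * hcross + r ^ 2 * hconst
  rw [← hα2]
  field_simp
  linear_combination key
end

section
/- Regime I resolvent inversion yields Φ(w) = α/u independently of R and Q. Let α, Q, R ∈ ℝ with R+Q+1 ≠ 0, and let u ∈ ℝ with u ≠ 0, u ≠ 1 and u ≠ α. Define z = −([1−α(1+Q)]·u + αQ)/((u−1)(u−α)). Then (1/((R+Q+1)u))·[Rα + (u−α)/(u−1) + (u−α)·z] = α/u. -/
/-- Regime I resolvent inversion yields `Φ(w) = α/u` independently of `R` and
`Q`: with `z = −([1−α(1+Q)]u + αQ)/((u−1)(u−α))`, one has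
`(1/((R+Q+1)u))·[Rα + (u−α)/(u−1) + (u−α)z] = α/u`. -/
theorem regimeI_resolvent_inversion_Phi
    (α Q R u z : ℝ) (hRQ : R + Q + 1 ≠ 0)
    (hu0 : u ≠ 0) (hu1 : u ≠ 1) (huα : u ≠ α)
    (hz : z = -(((1 - α * (1 + Q)) * u + α * Q) / ((u - 1) * (u - α)))) :
    (1 / ((R + Q + 1) * u)) * (R * α + (u - α) / (u - 1) + (u - α) * z) = α / u := by
  subst hz
  have h1 : u - 1 ≠ 0 := sub_ne_zero.mpr hu1
  have h2 : u - α ≠ 0 := sub_ne_zero.mpr huα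
  field_simp
  ring
end
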